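/- arXiv:0809.4089 — 3 statements merged into one kernel-verified Lean document; each statement's English description precedes it below -/
import Mathlib

section
/- Let A ∈ ℝⁿˣⁿ, P ∈ ℝⁿˣⁿ positive semidefinite, Q ∈ ℝⁿˣⁿ positive semidefinite, C ∈ ℝᵐˣⁿ, R ∈ ℝᵐˣᵐ positive definite. Define M₁ = A P Cᵀ (C P Cᵀ + R)⁻¹ C P Aᵀ and M₂ = A P Cᵀ (C P Cᵀ + R/2)⁻¹ C P Aᵀ, S = A P Aᵀ + Q. Let f : [0,1] → [0,1] be twice differentiable, convex, decreasing with f(0)=1, and define J(d) = S - f(d) f(1-d) M₂ - (f(d) - 2 f(d) f(1-d) + f(1-d)) M₁. Then J''(d) ⪯ 0 for all d ∈ (0,1), i.e., J is matrix concave on [0,1]. -/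
/-!
Fix `x` and put `a = xᵀ M₂ x`, `b = xᵀ M₁ x`. Then
`xᵀ J(d) x = s - (a - 2b) f(d) f(1-d) - b (f(d) + f(1-d))`, whose second derivative is
`f''(d) ((2b - a) f(1-d) - b) + f''(1-d) ((2b - a) f(d) - b) - 2 (2b - a) f'(d) f'(1-d)`.
Every term is nonpositive since `f'' ≥ 0`, `f' ≤ 0`, `f ≤ 1` and `b ≤ a ≤ 2b`. The bounds on `a` are
`M₁ ⪯ M₂ ⪯ 2 M₁`, obtained by congruence from `(V + R)⁻¹ ⪯ (V + R/2)⁻¹ ⪯ 2 (V + R)⁻¹` for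
`V = C P Cᵀ`, i.e. from the antitonicity of matrix inversion applied to
`V + R/2 ⪯ V + R ⪯ 2 (V + R/2)`.
-/

open Matrix Set

section LoewnerOrder

open scoped ComplexOrder

variable {n : Type*} [Fintype n]

theorem Matrix.dotProduct_transpose_mul_mul_mulVec {m : Type*} [Fintype m] (L : Matrix m n ℝ)
    (G : Matrix m m ℝ) (x : n → ℝ) : x ⬝ᵥ (Lᵀ * G * L) *ᵥ x = (L *ᵥ x) ⬝ᵥ G *ᵥ (L *ᵥ x) := by
  rw [← mulVec_mulVec, ← mulVec_mulVec, dotProduct_mulVec, vecMul_transpose]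

theorem Matrix.PosSemidef.dotProduct_mulVec_le {X Y : Matrix n n ℝ} (h : (Y - X).PosSemidef)
    (v : n → ℝ) : v ⬝ᵥ X *ᵥ v ≤ v ⬝ᵥ Y *ᵥ v := by
  simpa [sub_mulVec] using h.dotProduct_mulVec_nonneg v

variable [DecidableEq n]

/-- The Schur complements of `!![Y, 1; 1, X⁻¹]` with respect to its two diagonal blocks are
`X⁻¹ - Y⁻¹` and `Y - X`, so one is positive semidefinite iff the other is. -/
theorem Matrix.PosDef.posSemidef_inv_sub_inv {𝕜 : Type*} [RCLike 𝕜] {X Y : Matrix n n 𝕜}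
    (hX : X.PosDef) (hXY : (Y - X).PosSemidef) : (X⁻¹ - Y⁻¹).PosSemidef := by
  have hY : Y.PosDef := by simpa using hX.add_posSemidef hXY
  have := hX.isUnit.invertible
  have := hY.isUnit.invertible
  have := hX.inv.isUnit.invertible
  have hblock := (PosDef.fromBlocks₂₂ Y 1 hX.inv).mpr (by simpa using hXY)
  simpa using (PosDef.fromBlocks₁₁ 1 X⁻¹ hY).mp hblock

variable {V R : Matrix n n ℝ}

theorem posSemidef_inv_add_half_smul_sub_inv_add (hV : V.PosSemidef) (hR : R.PosDef) :
    ((V + (2:ℝ)⁻¹ • R)⁻¹ - (V + R)⁻¹).PosSemidef := by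
  refine (PosDef.posSemidef_add hV (hR.smul (by norm_num))).posSemidef_inv_sub_inv ?_
  have hdiff : V + R - (V + (2:ℝ)⁻¹ • R) = (2:ℝ)⁻¹ • R := by module
  rw [hdiff]
  exact (hR.smul (by norm_num)).posSemidef

theorem posSemidef_two_smul_inv_add_sub_inv_add_half_smul (hV : V.PosSemidef) (hR : R.PosDef) :
    ((2:ℝ) • (V + R)⁻¹ - (V + (2:ℝ)⁻¹ • R)⁻¹).PosSemidef := by
  have hB : (V + R).PosDef := PosDef.posSemidef_add hV hR
  have hdiff : V + (2:ℝ)⁻¹ • R - (2:ℝ)⁻¹ • (V + R) = (2:ℝ)⁻¹ • V := by module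
  have h := (hB.smul (show (0:ℝ) < 2⁻¹ by norm_num)).posSemidef_inv_sub_inv
    (Y := V + (2:ℝ)⁻¹ • R) (hdiff ▸ hV.smul (by norm_num))
  have hinv : ((2:ℝ)⁻¹ • (V + R))⁻¹ = (2:ℝ) • (V + R)⁻¹ := by
    refine inv_eq_left_inv ?_
    rw [smul_mul_smul_comm, nonsing_inv_mul _ ((isUnit_iff_isUnit_det _).mp hB.isUnit)]
    norm_num
  rwa [hinv] at h

end LoewnerOrder

section Reflection

theorem HasDerivAt.mul_comp_one_sub {g h : ℝ → ℝ} {g' h' t : ℝ} (hg : HasDerivAt g g' t)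
    (hh : HasDerivAt h h' (1 - t)) :
    HasDerivAt (fun u => g u * h (1 - u)) (g' * h (1 - t) - g t * h') t := by
  simpa [sub_eq_add_neg] using hg.fun_mul (hh.comp_const_sub 1 t)

def reflectedProfile (f : ℝ → ℝ) (s c b t : ℝ) : ℝ :=
  s - c * (f t * f (1 - t)) - b * (f t + f (1 - t))

variable {f f' f'' : ℝ → ℝ}

theorem exists_hasDerivAt_reflectedProfile (hf : ∀ t, HasDerivAt f (f' t) t)
    (hf' : ∀ t, HasDerivAt f' (f'' t) t) (s c b : ℝ) :
    ∃ F' : ℝ → ℝ,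
      (∀ t, HasDerivAt (reflectedProfile f s c b) (F' t) t) ∧
      ∀ t, HasDerivAt F'
        (-(c * (f'' t * f (1 - t) - 2 * (f' t * f' (1 - t)) + f t * f'' (1 - t)))
          - b * (f'' t + f'' (1 - t))) t := by
  refine ⟨fun t => -(c * (f' t * f (1 - t) - f t * f' (1 - t))) - b * (f' t - f' (1 - t)),
    fun t => ?_, fun t => ?_⟩
  · have hprod := (hf t).mul_comp_one_sub (hf (1 - t))
    have hsum := (hf t).add ((hf (1 - t)).comp_const_sub 1 t)
    exact (((hasDerivAt_const t s).sub (hprod.const_mul c)).sub (hsum.const_mul b)).congr_deriv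
      (by ring)
  · have hprod := ((hf' t).mul_comp_one_sub (hf (1 - t))).sub
      ((hf t).mul_comp_one_sub (hf' (1 - t)))
    have hsum := (hf' t).sub ((hf' (1 - t)).comp_const_sub 1 t)
    exact ((hprod.const_mul c).neg.sub (hsum.const_mul b)).congr_deriv (by ring)

theorem reflectedProfile_second_deriv_nonpos {p q p' q' p'' q'' c b : ℝ} (hp : p ≤ 1)
    (hq : q ≤ 1) (hp' : p' ≤ 0) (hq' : q' ≤ 0) (hp'' : 0 ≤ p'') (hq'' : 0 ≤ q'') (hc : c ≤ 0)
    (hbc : 0 ≤ b + c) :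
    -(c * (p'' * q - 2 * (p' * q') + p * q'')) - b * (p'' + q'') ≤ 0 := by
  nlinarith [mul_nonneg hp'' (mul_nonneg (neg_nonneg.2 hc) (sub_nonneg.2 hq)),
    mul_nonneg hq'' (mul_nonneg (neg_nonneg.2 hc) (sub_nonneg.2 hp)),
    mul_nonneg hp'' hbc, mul_nonneg hq'' hbc,
    mul_nonneg (neg_nonneg.2 hc) (mul_nonneg_of_nonpos_of_nonpos hp' hq')]

theorem reflectedProfile_deriv2_nonpos_and_concaveOn (hf : Differentiable ℝ f)
    (hf' : Differentiable ℝ (deriv f)) (hconv : ConvexOn ℝ (Icc 0 1) f)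
    (hdec : AntitoneOn f (Icc 0 1))
    (hle : ∀ t ∈ Icc (0:ℝ) 1, f t ≤ 1) {c b : ℝ} (hc : c ≤ 0) (hbc : 0 ≤ b + c) (s : ℝ) :
    (∀ t ∈ Ioo 0 1, deriv (deriv (reflectedProfile f s c b)) t ≤ 0) ∧
      ConcaveOn ℝ (Icc 0 1) (reflectedProfile f s c b) := by
  obtain ⟨F', h₁, h₂⟩ := exists_hasDerivAt_reflectedProfile (fun t => (hf t).hasDerivAt)
    (fun t => (hf' t).hasDerivAt) s c b
  have hderiv : deriv (reflectedProfile f s c b) = F' := funext fun t => (h₁ t).deriv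
  have hmono : MonotoneOn (deriv f) (Icc 0 1) := hconv.monotoneOn_deriv fun t _ => hf t
  have hsigns : ∀ t ∈ Ioo (0:ℝ) 1, f t ≤ 1 ∧ deriv f t ≤ 0 ∧ 0 ≤ deriv (deriv f) t :=
    fun t ht => ⟨hle t (Ioo_subset_Icc_self ht),
      (hf t).hasDerivAt.hasDerivWithinAt.nonpos_of_antitoneOn (isOpen_Ioo.preperfect t ht)
        (hdec.mono Ioo_subset_Icc_self),
      (hf' t).hasDerivAt.hasDerivWithinAt.nonneg_of_monotoneOn (isOpen_Ioo.preperfect t ht)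
        (hmono.mono Ioo_subset_Icc_self)⟩
  have hF'' : ∀ t ∈ Ioo (0:ℝ) 1, deriv (deriv (reflectedProfile f s c b)) t ≤ 0 := by
    intro t ht
    obtain ⟨hp, hp', hp''⟩ := hsigns t ht
    obtain ⟨hq, hq', hq''⟩ := hsigns (1 - t) ⟨by linarith [ht.2], by linarith [ht.1]⟩
    rw [hderiv, (h₂ t).deriv]
    exact reflectedProfile_second_deriv_nonpos hp hq hp' hq' hp'' hq'' hc hbc
  refine ⟨hF'', concaveOn_of_deriv2_nonpos (convex_Icc 0 1)
    (fun t _ => (h₁ t).continuousAt.continuousWithinAt)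
    (fun t _ => (h₁ t).differentiableAt.differentiableWithinAt)
    (fun t _ => hderiv ▸ (h₂ t).differentiableAt.differentiableWithinAt) ?_⟩
  rw [interior_Icc]
  exact hF''

end Reflection

theorem stmt_5_general {n m : ℕ} (A P : Matrix (Fin n) (Fin n) ℝ)
    (hP : P.PosSemidef)
    (C : Matrix (Fin m) (Fin n) ℝ) (R : Matrix (Fin m) (Fin m) ℝ) (hR : R.PosDef)
    (M₁ M₂ S : Matrix (Fin n) (Fin n) ℝ)
    (hM₁ : M₁ = A * P * Cᵀ * (C * P * Cᵀ + R)⁻¹ * C * P * Aᵀ)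
    (hM₂ : M₂ = A * P * Cᵀ * (C * P * Cᵀ + (2:ℝ)⁻¹ • R)⁻¹ * C * P * Aᵀ)
    (f : ℝ → ℝ)
    (hd1 : Differentiable ℝ f) (hd2 : Differentiable ℝ (deriv f))
    (hconv : ConvexOn ℝ (Set.Icc (0:ℝ) 1) f)
    (hdec : AntitoneOn f (Set.Icc (0:ℝ) 1))
    (hrange : ∀ x ∈ Set.Icc (0:ℝ) 1, f x ∈ Set.Icc (0:ℝ) 1)
    (J : ℝ → Matrix (Fin n) (Fin n) ℝ)
    (hJ : ∀ d, J d = S - (f d * f (1 - d)) • M₂ -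
      (f d - 2 * f d * f (1 - d) + f (1 - d)) • M₁) :
    (∀ d ∈ Set.Ioo (0:ℝ) 1, ∀ x : Fin n → ℝ,
        deriv (deriv fun t => x ⬝ᵥ (J t).mulVec x) d ≤ 0) ∧
    (∀ x : Fin n → ℝ, ConcaveOn ℝ (Set.Icc (0:ℝ) 1) fun d => x ⬝ᵥ (J d).mulVec x) := by
  have hV : (C * P * Cᵀ).PosSemidef := by simpa using hP.mul_mul_conjTranspose_same C
  have hPt : Pᵀ = P := by simpa using hP.isHermitian.eq
  have hconj : ∀ G : Matrix (Fin m) (Fin m) ℝ,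
      A * P * Cᵀ * G * C * P * Aᵀ = (C * P * Aᵀ)ᵀ * G * (C * P * Aᵀ) := fun G => by
    simp only [transpose_mul, transpose_transpose, hPt, Matrix.mul_assoc]
  suffices h : ∀ x : Fin n → ℝ,
      (∀ d ∈ Ioo (0:ℝ) 1, deriv (deriv fun t => x ⬝ᵥ (J t).mulVec x) d ≤ 0) ∧
        ConcaveOn ℝ (Icc 0 1) fun d => x ⬝ᵥ (J d).mulVec x from
    ⟨fun d hd x => (h x).1 d hd, fun x => (h x).2⟩
  intro x
  set v := (C * P * Aᵀ) *ᵥ x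
  have hb_le_a := (posSemidef_inv_add_half_smul_sub_inv_add hV hR).dotProduct_mulVec_le v
  have ha_le_two_b :=
    (posSemidef_two_smul_inv_add_sub_inv_add_half_smul hV hR).dotProduct_mulVec_le v
  rw [smul_mulVec, dotProduct_smul, smul_eq_mul] at ha_le_two_b
  have hJx : (fun t => x ⬝ᵥ (J t).mulVec x) = reflectedProfile f (x ⬝ᵥ S *ᵥ x)
      (x ⬝ᵥ M₂ *ᵥ x - 2 * x ⬝ᵥ M₁ *ᵥ x) (x ⬝ᵥ M₁ *ᵥ x) := by
    funext t
    simp only [hJ, reflectedProfile, sub_mulVec, smul_mulVec, dotProduct_sub, dotProduct_smul,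
      smul_eq_mul]
    ring
  rw [hJx]
  refine reflectedProfile_deriv2_nonpos_and_concaveOn hd1 hd2 hconv hdec
    (fun t ht => (hrange t ht).2) ?_ ?_ _
  all_goals
    rw [hM₁, hM₂, hconj, hconj, dotProduct_transpose_mul_mul_mulVec,
      dotProduct_transpose_mul_mul_mulVec]
    linarith

theorem stmt_5 {n m : ℕ} (A P Q : Matrix (Fin n) (Fin n) ℝ)
    (hP : P.PosSemidef) (hQ : Q.PosSemidef)
    (C : Matrix (Fin m) (Fin n) ℝ) (R : Matrix (Fin m) (Fin m) ℝ) (hR : R.PosDef)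
    (M₁ M₂ S : Matrix (Fin n) (Fin n) ℝ)
    (hM₁ : M₁ = A * P * Cᵀ * (C * P * Cᵀ + R)⁻¹ * C * P * Aᵀ)
    (hM₂ : M₂ = A * P * Cᵀ * (C * P * Cᵀ + (2:ℝ)⁻¹ • R)⁻¹ * C * P * Aᵀ)
    (hS : S = A * P * Aᵀ + Q)
    (f : ℝ → ℝ)
    (hd1 : Differentiable ℝ f) (hd2 : Differentiable ℝ (deriv f))
    (hconv : ConvexOn ℝ (Set.Icc (0:ℝ) 1) f)
    (hdec : AntitoneOn f (Set.Icc (0:ℝ) 1)) (hf0 : f 0 = 1)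
    (hrange : ∀ x ∈ Set.Icc (0:ℝ) 1, f x ∈ Set.Icc (0:ℝ) 1)
    (J : ℝ → Matrix (Fin n) (Fin n) ℝ)
    (hJ : ∀ d, J d = S - (f d * f (1 - d)) • M₂ -
      (f d - 2 * f d * f (1 - d) + f (1 - d)) • M₁) :
    (∀ d ∈ Set.Ioo (0:ℝ) 1, ∀ x : Fin n → ℝ,
        deriv (deriv fun t => x ⬝ᵥ (J t).mulVec x) d ≤ 0) ∧
    (∀ x : Fin n → ℝ, ConcaveOn ℝ (Set.Icc (0:ℝ) 1) fun d => x ⬝ᵥ (J d).mulVec x) :=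
  stmt_5_general A P hP C R hR M₁ M₂ S hM₁ hM₂ f hd1 hd2 hconv hdec hrange J hJ
end

section
/- Let P ⪰ 0 be n×n, C ∈ ℝᵐˣⁿ, R ∈ ℝᵐˣᵐ positive definite, and A ∈ ℝⁿˣⁿ. Define M₁ = A P Cᵀ (C P Cᵀ + R)⁻¹ C P Aᵀ and M₂ = A P Cᵀ (C P Cᵀ + R/2)⁻¹ C P Aᵀ. Then M₂ ⪰ M₁ ⪰ 0 and 2M₁ - M₂ ⪰ 0. -/
/-! With `B = A P Cᵀ` and `T = C P Cᵀ` we have `Mᵢ = B Sᵢ⁻¹ Bᵀ` for `S₁ = T + R` and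
`S₂ = T + R/2`, and `S₁ ⪰ S₂ ⪰ S₁/2 ≻ 0`. Inversion is antitone on positive definite matrices
(`Y⁻¹ - X⁻¹ = X⁻¹ (D + D Y⁻¹ D) X⁻¹` with `D = X - Y`) and `X ↦ B X Bᵀ` preserves `⪰`, so
`S₂⁻¹ ⪰ S₁⁻¹` gives `M₂ ⪰ M₁`, and `(S₁/2)⁻¹ = 2 S₁⁻¹ ⪰ S₂⁻¹` gives `2 M₁ ⪰ M₂`. -/

open Matrix
open scoped ComplexOrder

namespace Matrix

variable {ι : Type*} [Fintype ι] [DecidableEq ι]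

lemma inv_sub_inv_eq_of_isUnit {α : Type*} [CommRing α] {X Y : Matrix ι ι α} (hX : IsUnit X)
    (hY : IsUnit Y) : Y⁻¹ - X⁻¹ = X⁻¹ * ((X - Y) + (X - Y) * Y⁻¹ * (X - Y)) * X⁻¹ := by
  rw [isUnit_iff_isUnit_det] at hX hY
  simp only [Matrix.mul_add, Matrix.add_mul, Matrix.mul_sub, Matrix.sub_mul, ← Matrix.mul_assoc,
    nonsing_inv_mul _ hX, nonsing_inv_mul _ hY, Matrix.one_mul]
  simp only [Matrix.mul_assoc, mul_nonsing_inv _ hX, mul_nonsing_inv _ hY, Matrix.mul_one]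
  abel

variable {𝕜 : Type*} [RCLike 𝕜]

lemma PosDef.posSemidef_inv_sub_inv_s6 {X Y : Matrix ι ι 𝕜} (hY : Y.PosDef)
    (hXY : (X - Y).PosSemidef) : (Y⁻¹ - X⁻¹).PosSemidef := by
  have hX : X.PosDef := by simpa using hY.add_posSemidef hXY
  have hmid : ((X - Y) + (X - Y)ᴴ * Y⁻¹ * (X - Y)).PosSemidef :=
    hXY.add (hY.inv.posSemidef.conjTranspose_mul_mul_same _)
  rw [inv_sub_inv_eq_of_isUnit hX.isUnit hY.isUnit]
  simpa only [hXY.isHermitian.eq, hX.inv.isHermitian.eq] using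
    hmid.mul_mul_conjTranspose_same X⁻¹

lemma PosDef.posSemidef_mul_inv_mul_sub {κ : Type*} [Fintype κ] {X Y : Matrix ι ι 𝕜}
    (hY : Y.PosDef) (hXY : (X - Y).PosSemidef) (B : Matrix κ ι 𝕜) :
    (B * Y⁻¹ * Bᴴ - B * X⁻¹ * Bᴴ).PosSemidef := by
  simpa only [Matrix.mul_sub, Matrix.sub_mul] using
    (hY.posSemidef_inv_sub_inv_s6 hXY).mul_mul_conjTranspose_same B

lemma mul_mul_transpose_mul_mul_eq {l m n α : Type*} [Fintype m] [Fintype n] [CommSemiring α]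
    [StarRing α] [TrivialStar α] (A : Matrix l n α) {P : Matrix n n α} (hP : P.IsHermitian)
    (C : Matrix m n α) (S : Matrix m m α) :
    A * P * Cᵀ * S * C * P * Aᵀ = (A * P * Cᵀ) * S * (A * P * Cᵀ)ᴴ := by
  have hPt : Pᵀ = P := by rw [← conjTranspose_eq_transpose_of_trivial, hP.eq]
  simp [conjTranspose_eq_transpose_of_trivial, hPt, Matrix.mul_assoc]

section KalmanReduction

variable {κ : Type*} [Fintype κ] {T R : Matrix ι ι ℝ} (hT : T.PosSemidef) (hR : R.PosDef)
  (B : Matrix κ ι ℝ)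
include hT hR

lemma posSemidef_mul_inv_add_half_smul_mul_sub :
    (B * (T + (2:ℝ)⁻¹ • R)⁻¹ * Bᴴ - B * (T + R)⁻¹ * Bᴴ).PosSemidef := by
  have hR₂ : ((2:ℝ)⁻¹ • R).PosDef := hR.smul (by norm_num)
  refine (hR₂.posSemidef_add hT).posSemidef_mul_inv_mul_sub ?_ B
  rw [show T + R - (T + (2:ℝ)⁻¹ • R) = (2:ℝ)⁻¹ • R by module]
  exact hR₂.posSemidef

lemma posSemidef_two_smul_mul_inv_add_mul_sub :
    ((2:ℝ) • (B * (T + R)⁻¹ * Bᴴ) - B * (T + (2:ℝ)⁻¹ • R)⁻¹ * Bᴴ).PosSemidef := by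
  have hS : (T + R).PosDef := hR.posSemidef_add hT
  let : Invertible (2⁻¹ : ℝ) := invertibleOfNonzero (by norm_num)
  have hhalf : B * ((2:ℝ)⁻¹ • (T + R))⁻¹ * Bᴴ = (2:ℝ) • (B * (T + R)⁻¹ * Bᴴ) := by
    rw [Matrix.inv_smul _ _ ((isUnit_iff_isUnit_det _).1 hS.isUnit), invOf_eq_inv, inv_inv,
      Matrix.mul_smul, Matrix.smul_mul]
  rw [← hhalf]
  refine (hS.smul (by norm_num : (0:ℝ) < 2⁻¹)).posSemidef_mul_inv_mul_sub ?_ B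
  rw [show T + (2:ℝ)⁻¹ • R - (2:ℝ)⁻¹ • (T + R) = (2:ℝ)⁻¹ • T by module]
  exact hT.smul (by norm_num)

end KalmanReduction

end Matrix

theorem stmt_6 {n m : ℕ} (A P : Matrix (Fin n) (Fin n) ℝ) (hP : P.PosSemidef)
    (C : Matrix (Fin m) (Fin n) ℝ) (R : Matrix (Fin m) (Fin m) ℝ) (hR : R.PosDef)
    (M₁ M₂ : Matrix (Fin n) (Fin n) ℝ)
    (hM₁ : M₁ = A * P * Cᵀ * (C * P * Cᵀ + R)⁻¹ * C * P * Aᵀ)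
    (hM₂ : M₂ = A * P * Cᵀ * (C * P * Cᵀ + (2:ℝ)⁻¹ • R)⁻¹ * C * P * Aᵀ) :
    (M₂ - M₁).PosSemidef ∧ M₁.PosSemidef ∧ ((2:ℝ) • M₁ - M₂).PosSemidef := by
  have hT : (C * P * Cᵀ).PosSemidef := by
    simpa [conjTranspose_eq_transpose_of_trivial] using hP.mul_mul_conjTranspose_same C
  rw [mul_mul_transpose_mul_mul_eq A hP.isHermitian] at hM₁ hM₂
  subst hM₁ hM₂
  exact ⟨posSemidef_mul_inv_add_half_smul_mul_sub hT hR _,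
    (hR.posSemidef_add hT).inv.posSemidef.mul_mul_conjTranspose_same _,
    posSemidef_two_smul_mul_inv_add_mul_sub hT hR _⟩
end

section
/- Let f(d) = e^{-d} on [0,1]. Then f is twice differentiable, convex, strictly decreasing, f(0) = 1, and f maps [0,1] into [0,1]. Consequently, for symmetric matrices M₁, M₂ with M₂ ⪰ M₁ ⪰ 0 and 2M₁ ⪰ M₂, the function d ↦ S - e^{-d}e^{-(1-d)}M₂ - (e^{-d} - 2e^{-d}e^{-(1-d)} + e^{-(1-d)})M₁ is matrix concave on [0,1] and attains its Loewner lower bound over [0,1] at d=0 or d=1. -/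
/-!
Because `e^{-d} e^{-(1-d)} = e^{-1}` does not depend on `d`, the quadratic form `xᵀ J(d) x` is a
constant minus `(e^{-d} + e^{-(1-d)}) · xᵀ M₁ x`. The coefficient is convex and `xᵀ M₁ x ≥ 0`, so the
form is concave in `d`, and a concave function on an interval is smallest at an endpoint.
-/

open Set Real Matrix

lemma convexOn_exp_mul_add (a b : ℝ) : ConvexOn ℝ univ fun d => exp (a * d + b) := by
  simpa [Function.comp_def] using
    convexOn_exp.comp_affineMap (a • AffineMap.id ℝ ℝ + AffineMap.const ℝ ℝ b)

lemma convexOn_exp_neg_add_exp_neg_one_sub :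
    ConvexOn ℝ univ fun d => exp (-d) + exp (-(1 - d)) := by
  refine ((convexOn_exp_mul_add (-1) 0).add (convexOn_exp_mul_add 1 (-1))).congr fun d _ => ?_
  simp only [Pi.add_apply]
  ring_nf

lemma concaveOn_const_sub_mul {s : Set ℝ} (hs : Convex ℝ s) {g : ℝ → ℝ} (hg : ConvexOn ℝ s g)
    (c : ℝ) {a : ℝ} (ha : 0 ≤ a) : ConcaveOn ℝ s fun d => c - g d * a :=
  (concaveOn_const c hs).sub (by simpa only [smul_eq_mul, mul_comm] using hg.smul ha)

lemma ConcaveOn.isLeast_image_Icc {φ : ℝ → ℝ} {a b : ℝ} (hab : a ≤ b)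
    (hφ : ConcaveOn ℝ (Icc a b) φ) : IsLeast (φ '' Icc a b) (min (φ a) (φ b)) := by
  refine ⟨?_, ?_⟩
  · rcases min_choice (φ a) (φ b) with h | h <;> rw [h]
    exacts [mem_image_of_mem φ (left_mem_Icc.2 hab), mem_image_of_mem φ (right_mem_Icc.2 hab)]
  · rintro _ ⟨d, hd, rfl⟩
    exact hφ.ge_on_segment (left_mem_Icc.2 hab) (right_mem_Icc.2 hab)
      (by rwa [segment_eq_Icc hab])

lemma dotProduct_mulVec_pathLoss {n : ℕ} (S M₁ M₂ : Matrix (Fin n) (Fin n) ℝ)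
    (x : Fin n → ℝ) (d : ℝ) :
    x ⬝ᵥ (S - (exp (-d) * exp (-(1 - d))) • M₂ -
        (exp (-d) - 2 * exp (-d) * exp (-(1 - d)) + exp (-(1 - d))) • M₁) *ᵥ x =
      (x ⬝ᵥ S *ᵥ x - exp (-1) * (x ⬝ᵥ M₂ *ᵥ x) + 2 * exp (-1) * (x ⬝ᵥ M₁ *ᵥ x)) -
        (exp (-d) + exp (-(1 - d))) * (x ⬝ᵥ M₁ *ᵥ x) := by
  have hprod : exp (-d) * exp (-(1 - d)) = exp (-1) := by rw [← exp_add]; ring_nf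
  simp only [sub_mulVec, smul_mulVec, dotProduct_sub, dotProduct_smul, smul_eq_mul]
  linear_combination (2 * (x ⬝ᵥ M₁ *ᵥ x) - x ⬝ᵥ M₂ *ᵥ x) * hprod

theorem stmt_14_general {n : ℕ} (f : ℝ → ℝ) (hf : f = fun d => Real.exp (-d))
    (S M₁ M₂ : Matrix (Fin n) (Fin n) ℝ)
    (hM₁ : M₁.PosSemidef)
    (J : ℝ → Matrix (Fin n) (Fin n) ℝ)
    (hJ : ∀ d, J d = S - (f d * f (1 - d)) • M₂ -
      (f d - 2 * f d * f (1 - d) + f (1 - d)) • M₁) :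
    ContDiff ℝ 2 f ∧
    ConvexOn ℝ (Set.Icc (0:ℝ) 1) f ∧
    StrictAntiOn f (Set.Icc (0:ℝ) 1) ∧
    f 0 = 1 ∧
    (∀ x ∈ Set.Icc (0:ℝ) 1, f x ∈ Set.Icc (0:ℝ) 1) ∧
    (∀ x : Fin n → ℝ, ConcaveOn ℝ (Set.Icc (0:ℝ) 1) fun d => x ⬝ᵥ (J d).mulVec x) ∧
    (∀ x : Fin n → ℝ,
      IsLeast ((fun d => x ⬝ᵥ (J d).mulVec x) '' Set.Icc (0:ℝ) 1)
        (min (x ⬝ᵥ (J 0).mulVec x) (x ⬝ᵥ (J 1).mulVec x))) := by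
  subst hf
  have hconcave : ∀ x : Fin n → ℝ,
      ConcaveOn ℝ (Icc 0 1) fun d => x ⬝ᵥ (J d).mulVec x := fun x => by
    simp only [hJ, dotProduct_mulVec_pathLoss]
    exact concaveOn_const_sub_mul (convex_Icc 0 1)
      (convexOn_exp_neg_add_exp_neg_one_sub.subset (subset_univ _) (convex_Icc 0 1)) _
      (hM₁.dotProduct_mulVec_nonneg x)
  refine ⟨contDiff_exp.comp contDiff_neg, ?_, ?_, by simp, ?_, hconcave,
    fun x => (hconcave x).isLeast_image_Icc zero_le_one⟩
  · simpa using (convexOn_exp_mul_add (-1) 0).subset (subset_univ _) (convex_Icc 0 1)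
  · exact fun a _ b _ hab => exp_lt_exp.2 (neg_lt_neg hab)
  · exact fun d hd => ⟨(exp_pos _).le, exp_le_one_iff.2 (neg_nonpos.2 hd.1)⟩

theorem stmt_14 {n : ℕ} (f : ℝ → ℝ) (hf : f = fun d => Real.exp (-d))
    (S M₁ M₂ : Matrix (Fin n) (Fin n) ℝ)
    (hSs : S.IsSymm) (hM₁s : M₁.IsSymm) (hM₂s : M₂.IsSymm)
    (hM₁ : M₁.PosSemidef) (hM₂₁ : (M₂ - M₁).PosSemidef)
    (h2M : ((2:ℝ) • M₁ - M₂).PosSemidef)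
    (J : ℝ → Matrix (Fin n) (Fin n) ℝ)
    (hJ : ∀ d, J d = S - (f d * f (1 - d)) • M₂ -
      (f d - 2 * f d * f (1 - d) + f (1 - d)) • M₁) :
    ContDiff ℝ 2 f ∧
    ConvexOn ℝ (Set.Icc (0:ℝ) 1) f ∧
    StrictAntiOn f (Set.Icc (0:ℝ) 1) ∧
    f 0 = 1 ∧
    (∀ x ∈ Set.Icc (0:ℝ) 1, f x ∈ Set.Icc (0:ℝ) 1) ∧
    (∀ x : Fin n → ℝ, ConcaveOn ℝ (Set.Icc (0:ℝ) 1) fun d => x ⬝ᵥ (J d).mulVec x) ∧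
    (∀ x : Fin n → ℝ,
      IsLeast ((fun d => x ⬝ᵥ (J d).mulVec x) '' Set.Icc (0:ℝ) 1)
        (min (x ⬝ᵥ (J 0).mulVec x) (x ⬝ᵥ (J 1).mulVec x))) :=
  stmt_14_general f hf S M₁ M₂ hM₁ J hJ
end
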